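/- For all integers α, β ≥ 2 and all real numbers s_1, s_2 with 0 < s_2 < s_1 < 1, it holds that I_{α,β}(s_1,s_2) = 2(1-s_1)s_2 [ 2(α-1)(β-1)(s_1-s_2) I_{α-2,β-2}(s_1,s_2) + (α+β-1) I_{α-1,β-1}(s_1,s_2) ]. -/

import Mathlib

open MeasureTheory Real

/-- One-dimensional Gaussian heat kernel. -/
noncomputable def g1 (t x : ℝ) : ℝ :=
  (4 * Real.pi * t) ^ (-(1 : ℝ) / 2) * Real.exp (-x ^ 2 / (4 * t))

/-- `I_{α,β}(s₁,s₂) = ∫∫ x^α y^β g(1-s₁,x) g(s₁-s₂,x-y) g(s₂,y) dx dy`. -/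
noncomputable def Iab (α β : ℕ) (s₁ s₂ : ℝ) : ℝ :=
  ∫ x : ℝ, ∫ y : ℝ, x ^ α * y ^ β * g1 (1 - s₁) x * g1 (s₁ - s₂) (x - y) * g1 s₂ y

/-!
Completing the square, `g(1-s₁,x) g(s₁-s₂,x-y) g(s₂,y) = g(1,0) g(σ,x) g(τ,y-κx)` with
`σ = (1-s₁)s₁`, `κ = s₂/s₁`, `τ = (s₁-s₂)s₂/s₁`, so integrating out `y` gives
`I_{m,n} = g(1,0) ∫ x^m P_n(x) g(σ,x) dx`, where `P_n(x)` is the `n`-th moment of the Gaussian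
with mean `κx` and variance `2τ`. Gaussian integration by parts (Stein's identity)
`∫ x p(x) g(t,x-c) dx = c ∫ p g(t,·-c) + 2t ∫ p' g(t,·-c)` in `y` gives the three-term recursion
`P_{n+2} = κx P_{n+1} + 2τ(n+1) P_n`, hence `P_{n+1}' = κ(n+1) P_n`; in `x` it lowers the power
of `x` by two. Combining the two, with `σκ = (1-s₁)s₂` and `στ = (1-s₁)(s₁-s₂)s₂`, gives the
recursion.
-/

open Polynomial

section HeatKernel

variable {t : ℝ}

lemma g1_eq_mul_exp (t x : ℝ) :
    g1 t x = (4 * π * t) ^ (-(1 : ℝ) / 2) * exp (-(1 / (4 * t)) * x ^ 2) := by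
  unfold g1; congr 2; ring

lemma g1_neg (t x : ℝ) : g1 t (-x) = g1 t x := by
  simp [g1]

lemma g1_sub_mul_g1 {q r : ℝ} (hq : 0 < q) (hr : 0 < r) (x y : ℝ) :
    g1 q (x - y) * g1 r y = g1 (q + r) x * g1 (q * r / (q + r)) (y - r / (q + r) * x) := by
  have hqr : 0 < q + r := by linarith
  unfold g1
  rw [mul_mul_mul_comm, mul_mul_mul_comm ((4 * π * (q + r)) ^ (-(1 : ℝ) / 2)),
    ← mul_rpow (by positivity) (by positivity), ← mul_rpow (by positivity) (by positivity),
    ← exp_add, ← exp_add]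
  congr 2
  · field_simp
  · field_simp
    ring

lemma g1_mul_g1 {p s : ℝ} (hp : 0 < p) (hs : 0 < s) (x : ℝ) :
    g1 p x * g1 s x = g1 (p + s) 0 * g1 (p * s / (p + s)) x := by
  simpa [g1_neg] using g1_sub_mul_g1 hp hs 0 x

lemma integral_g1_sub (ht : 0 < t) (c : ℝ) : ∫ x, g1 t (x - c) = 1 := by
  rw [integral_sub_right_eq_self (g1 t) c]
  simp_rw [g1_eq_mul_exp]
  have h4 : π / (1 / (4 * t)) = 4 * π * t := by field_simp
  rw [integral_const_mul, integral_gaussian, h4, sqrt_eq_rpow, ← rpow_add (by positivity)]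
  norm_num

lemma hasDerivAt_g1 (t x : ℝ) : HasDerivAt (g1 t) (-(x / (2 * t)) * g1 t x) x := by
  have h := (((hasDerivAt_pow 2 x).const_mul (-(1 / (4 * t)))).exp.const_mul
    ((4 * π * t) ^ (-(1 : ℝ) / 2)))
  rw [funext (g1_eq_mul_exp t)]
  refine h.congr_deriv ?_
  beta_reduce
  push_cast
  ring

lemma integrable_pow_mul_g1 (ht : 0 < t) (n : ℕ) : Integrable fun x => x ^ n * g1 t x := by
  have h := (integrable_rpow_mul_exp_neg_mul_sq (b := 1 / (4 * t)) (by positivity)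
    (s := n) (by linarith [n.cast_nonneg (α := ℝ)])).const_mul ((4 * π * t) ^ (-(1 : ℝ) / 2))
  refine h.congr (Filter.Eventually.of_forall fun x => ?_)
  simp only [rpow_natCast, g1_eq_mul_exp]
  ring

lemma integrable_eval_mul_g1_sub (ht : 0 < t) (p : ℝ[X]) (c : ℝ) :
    Integrable fun x => p.eval x * g1 t (x - c) := by
  suffices h : ∀ q : ℝ[X], Integrable fun x => q.eval x * g1 t x by
    exact ((h (p.comp (X + C c))).comp_sub_right c).congr (ae_of_all _ fun x => by simp)
  intro q
  induction q using Polynomial.induction_on' with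
  | add p q hp hq => exact (hp.add hq).congr (ae_of_all _ fun x => by simp [add_mul])
  | monomial n a => simpa [mul_assoc] using (integrable_pow_mul_g1 ht n).const_mul a

theorem integral_mul_eval_mul_g1_sub (ht : 0 < t) (p : ℝ[X]) (c : ℝ) :
    ∫ x, x * p.eval x * g1 t (x - c) =
      c * (∫ x, p.eval x * g1 t (x - c)) + 2 * t * ∫ x, p.derivative.eval x * g1 t (x - c) := by
  have hv : ∀ x, HasDerivAt (fun x => g1 t (x - c)) (-((x - c) / (2 * t)) * g1 t (x - c)) x :=
    fun x => (hasDerivAt_g1 t (x - c)).comp_sub_const x c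
  have huv' : Integrable fun x => p.eval x * (-((x - c) / (2 * t)) * g1 t (x - c)) :=
    (integrable_eval_mul_g1_sub ht (C (-(1 / (2 * t))) * (X - C c) * p) c).congr
      (ae_of_all _ fun x => by simp; ring)
  have ibp := integral_mul_deriv_eq_deriv_mul_of_integrable (fun x _ => p.hasDerivAt x)
    (fun x _ => hv x) huv' (integrable_eval_mul_g1_sub ht p.derivative c)
    (integrable_eval_mul_g1_sub ht p c)
  have hsplit : ∀ x, x * p.eval x * g1 t (x - c) = c * (p.eval x * g1 t (x - c)) +
      -(2 * t) * (p.eval x * (-((x - c) / (2 * t)) * g1 t (x - c))) := fun x => by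
    field_simp
    ring
  simp_rw [hsplit]
  rw [integral_add ((integrable_eval_mul_g1_sub ht p c).const_mul c) (huv'.const_mul _),
    integral_const_mul, integral_const_mul, ibp]
  ring

end HeatKernel

noncomputable def condMoment (κ τ : ℝ) : ℕ → ℝ[X]
  | 0 => 1
  | 1 => C κ * X
  | n + 2 => C κ * X * condMoment κ τ (n + 1) + C (2 * τ * (n + 1)) * condMoment κ τ n

section CondMoment

variable (κ τ : ℝ)

lemma derivative_condMoment_succ (n : ℕ) :
    derivative (condMoment κ τ (n + 1)) = C (κ * (n + 1)) * condMoment κ τ n := by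
  induction n using Nat.twoStepInduction with
  | zero => simp [condMoment]
  | one =>
    simp only [condMoment, Nat.cast_zero, Nat.cast_one, zero_add, derivative_mul, derivative_C,
      derivative_X, derivative_one, map_mul, map_add, map_one]
    ring
  | more n ih₁ ih₂ =>
    rw [condMoment]
    simp only [derivative_add, derivative_mul, derivative_C, derivative_X, ih₁, ih₂]
    simp only [condMoment, map_mul, map_add, map_natCast, map_one]
    push_cast
    ring

variable {τ}

lemma integral_pow_mul_g1_sub_eq_eval_condMoment (hτ : 0 < τ) (n : ℕ) (x : ℝ) :
    ∫ y, y ^ n * g1 τ (y - κ * x) = (condMoment κ τ n).eval x := by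
  induction n using Nat.twoStepInduction with
  | zero => simpa [condMoment] using integral_g1_sub hτ (κ * x)
  | one => simpa [condMoment, integral_g1_sub hτ] using integral_mul_eval_mul_g1_sub hτ 1 (κ * x)
  | more n ih₁ ih₂ =>
    calc ∫ y, y ^ (n + 2) * g1 τ (y - κ * x)
        = ∫ y, y * (X ^ (n + 1) : ℝ[X]).eval y * g1 τ (y - κ * x) := by
          simp only [eval_pow, eval_X, ← pow_succ']
      _ = (condMoment κ τ (n + 2)).eval x := by
          rw [integral_mul_eval_mul_g1_sub hτ]
          simp only [eval_pow, eval_X, derivative_X_pow, eval_mul, eval_C,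
            add_tsub_cancel_right, mul_assoc, integral_const_mul, ih₁, ih₂]
          simp only [condMoment, eval_add, eval_mul, eval_C, eval_X]
          push_cast
          ring

end CondMoment

lemma derivative_X_pow_mul_condMoment (κ τ : ℝ) (m n : ℕ) :
    derivative (X ^ (m + 1) * condMoment κ τ (n + 2)) =
      C (κ * (m + n + 3)) * (X ^ (m + 1) * condMoment κ τ (n + 1)) +
        C (2 * τ * (m + 1) * (n + 1)) * (X ^ m * condMoment κ τ n) := by
  rw [derivative_mul, derivative_condMoment_succ, derivative_X_pow, condMoment]
  simp only [map_mul, map_add, map_natCast, map_one, map_ofNat, add_tsub_cancel_right]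
  push_cast
  ring

lemma integral_pow_add_two_mul_condMoment_mul_g1 {σ : ℝ} (hσ : 0 < σ) (κ τ : ℝ) (m n : ℕ) :
    ∫ x, x ^ (m + 2) * (condMoment κ τ (n + 2)).eval x * g1 σ x =
      2 * σ * κ * (m + n + 3) * (∫ x, x ^ (m + 1) * (condMoment κ τ (n + 1)).eval x * g1 σ x) +
        4 * σ * τ * (m + 1) * (n + 1) * ∫ x, x ^ m * (condMoment κ τ n).eval x * g1 σ x := by
  have hint : ∀ p : ℝ[X], Integrable fun x => p.eval x * g1 σ x := fun p => by
    simpa using integrable_eval_mul_g1_sub hσ p 0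
  have stein := integral_mul_eval_mul_g1_sub hσ (X ^ (m + 1) * condMoment κ τ (n + 2)) 0
  simp only [sub_zero, zero_mul, zero_add, derivative_X_pow_mul_condMoment] at stein
  simp_rw [eval_add, add_mul] at stein
  rw [integral_add (hint _) (hint _)] at stein
  simp only [eval_mul, eval_C, eval_pow, eval_X, mul_assoc, integral_const_mul] at stein
  simp only [pow_succ', mul_assoc] at stein ⊢
  linear_combination stein

lemma Iab_eq_integral_condMoment {s₁ s₂ : ℝ} (h₀ : 0 < s₂) (h₁ : s₂ < s₁) (h₂ : s₁ < 1)
    (m n : ℕ) :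
    Iab m n s₁ s₂ = g1 1 0 * ∫ x, x ^ m *
      (condMoment (s₂ / s₁) ((s₁ - s₂) * s₂ / s₁) n).eval x * g1 ((1 - s₁) * s₁) x := by
  have hs₁ : 0 < s₁ := h₀.trans h₁
  have hτ : 0 < (s₁ - s₂) * s₂ / s₁ := by have := sub_pos.2 h₁; positivity
  have hy : ∀ x y, g1 (s₁ - s₂) (x - y) * g1 s₂ y =
      g1 s₁ x * g1 ((s₁ - s₂) * s₂ / s₁) (y - s₂ / s₁ * x) := fun x y => by
    simpa using g1_sub_mul_g1 (sub_pos.2 h₁) h₀ x y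
  have hx : ∀ x, g1 (1 - s₁) x * g1 s₁ x = g1 1 0 * g1 ((1 - s₁) * s₁) x := fun x => by
    simpa using g1_mul_g1 (sub_pos.2 h₂) hs₁ x
  unfold Iab
  rw [← integral_const_mul]
  congr 1 with x
  calc ∫ y, x ^ m * y ^ n * g1 (1 - s₁) x * g1 (s₁ - s₂) (x - y) * g1 s₂ y
      = ∫ y, x ^ m * g1 (1 - s₁) x * g1 s₁ x *
          (y ^ n * g1 ((s₁ - s₂) * s₂ / s₁) (y - s₂ / s₁ * x)) :=
        integral_congr_ae (ae_of_all _ fun y => by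
          linear_combination x ^ m * y ^ n * g1 (1 - s₁) x * hy x y)
    _ = _ := by
      rw [integral_const_mul, integral_pow_mul_g1_sub_eq_eval_condMoment _ hτ,
        mul_assoc _ (g1 (1 - s₁) x), hx]
      ring

theorem Iab_rec_ii (α β : ℕ) (hα : 2 ≤ α) (hβ : 2 ≤ β)
    (s₁ s₂ : ℝ) (h₀ : 0 < s₂) (h₁ : s₂ < s₁) (h₂ : s₁ < 1) :
    Iab α β s₁ s₂ =
      2 * (1 - s₁) * s₂ *
        (2 * ((α : ℝ) - 1) * ((β : ℝ) - 1) * (s₁ - s₂) * Iab (α - 2) (β - 2) s₁ s₂ +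
          ((α : ℝ) + (β : ℝ) - 1) * Iab (α - 1) (β - 1) s₁ s₂) := by
  obtain ⟨m, rfl⟩ : ∃ m, α = m + 2 := ⟨α - 2, by omega⟩
  obtain ⟨n, rfl⟩ : ∃ n, β = n + 2 := ⟨β - 2, by omega⟩
  have hs₁ : s₁ ≠ 0 := (h₀.trans h₁).ne'
  have hσ : 0 < (1 - s₁) * s₁ := mul_pos (sub_pos.2 h₂) (h₀.trans h₁)
  simp only [Iab_eq_integral_condMoment h₀ h₁ h₂, integral_pow_add_two_mul_condMoment_mul_g1 hσ,
    Nat.add_sub_cancel, show m + 2 - 1 = m + 1 from rfl, show n + 2 - 1 = n + 1 from rfl]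
  push_cast
  field_simp
  ring
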